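/- Let λ, μ be partitions, ℓ = ℓ(λ), n ∈ ℤ_{≥0}, η = r_n(λ), and η̃ as in the r_n construction (η̃ = η̄ if n ≤ ℓ−1, η̃ = (λ,1^{n−ℓ+1}) if n ≥ ℓ). Then for all u ∈ ℂ: N_{μ,λ}(u)/N_{μ,η}(qu) = N_{μ,λ̄}(q^{-1}u)/N_{μ,η̃}(u) · (1 − u), as an identity of rational functions in u (equivalently, N_{μ,λ}(u)·N_{μ,η̃}(u) = (1−u)·N_{μ,λ̄}(q^{-1}u)·N_{μ,η}(qu)). -/

import Mathlib

open Finset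

noncomputable section

/-- The `i`-th part (0-indexed) of a partition given as a list of parts. -/
def part (l : List ℕ) (i : ℕ) : ℕ := l.getD i 0

/-- The `j`-th column length (0-indexed), i.e. λ'_{j+1} = #{i : λ_i ≥ j+1}. -/
def conjPart (l : List ℕ) (j : ℕ) : ℕ := (l.filter (fun p => j < p)).length

/-- A list of naturals represents a partition: weakly decreasing with positive parts. -/
def IsPartition (l : List ℕ) : Prop := l.Pairwise (· ≥ ·) ∧ ∀ p ∈ l, 0 < p

/-- The Nekrasov factor N_{λ,μ}(u) =
  ∏_{(i,j)∈λ}(1 - q^{-ℓ_λ(i,j)-a_μ(i,j)-1} u) · ∏_{(i,j)∈μ}(1 - q^{ℓ_μ(i,j)+a_λ(i,j)+1} u),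
  with cells 0-indexed: arm a_μ(i,j) = μ_{i+1} - (j+1), leg ℓ_λ(i,j) = λ'_{j+1} - (i+1). -/
def nek (q u : ℂ) (lam mu : List ℕ) : ℂ :=
  (∏ i ∈ Finset.range lam.length, ∏ j ∈ Finset.range (part lam i),
    (1 - q ^ (-((conjPart lam j : ℤ) - ((i : ℤ) + 1)) - ((part mu i : ℤ) - ((j : ℤ) + 1)) - 1) * u)) *
  (∏ i ∈ Finset.range mu.length, ∏ j ∈ Finset.range (part mu i),
    (1 - q ^ (((conjPart mu j : ℤ) - ((i : ℤ) + 1)) + ((part lam i : ℤ) - ((j : ℤ) + 1)) + 1) * u))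

/-- λ̄ : all parts decreased by 1, zero parts dropped. -/
def bar (l : List ℕ) : List ℕ := (l.map (fun p => p - 1)).filter (fun p => 0 < p)

/-- r_n(λ) = (λ_1+1, …, λ_n+1, λ_{n+2}, λ_{n+3}, …). -/
def rn (n : ℕ) (l : List ℕ) : List ℕ :=
  ((List.range n).map (fun i => part l i + 1)) ++ l.drop (n + 1)

/-- The conjugate (transposed) partition as a list. -/
def conjList (l : List ℕ) : List ℕ :=
  (List.range (part l 0)).map (fun j => conjPart l j)

end

/-! For a partition `B` of length `L`, the ratio `N_{μ,B}(q^s u) / N_{μ,B̄}(q^(s-1) u)` depends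
on `B` only through `L`: removing the first column of `B` strips one factor from each row of `B`,
and below row `L` the factors of the cells of `μ` telescope along the columns of `μ`. The ratios
for `(s, K + 1)` and `(s + 1, K)` differ by exactly the factor `1 - q^s u`. Both cases of the
theorem are such a comparison, of `λ` with `η` (lengths `ℓ`, `ℓ - 1`, and `η̄ = λ̃`) when `n < ℓ`,
and of `λ̃` with `η` (lengths `n + 1`, `n`, `η̄ = λ` and `λ̃`, `λ` having the same bar) when
`n ≥ ℓ`. Working with polynomials in `u` lets the ratio factors be cancelled. -/

open Polynomial

lemma part_eq_zero {l : List ℕ} {i : ℕ} (h : l.length ≤ i) : part l i = 0 :=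
  List.getD_eq_default _ _ h

lemma part_eq_getElem {l : List ℕ} {i : ℕ} (h : i < l.length) : part l i = l[i] :=
  List.getD_eq_getElem _ _ h

lemma part_le_of_forall_le {l : List ℕ} {a : ℕ} (h : ∀ b ∈ l, b ≤ a) (i : ℕ) : part l i ≤ a := by
  by_cases hi : i < l.length
  · rw [part_eq_getElem hi]; exact h _ (List.getElem_mem hi)
  · rw [part_eq_zero (not_lt.mp hi)]; exact Nat.zero_le _

lemma part_antitone {l : List ℕ} (hl : l.Pairwise (· ≥ ·)) {i i' : ℕ} (h : i ≤ i') :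
    part l i' ≤ part l i := by
  by_cases hi' : i' < l.length
  · have hi : i < l.length := h.trans_lt hi'
    rw [part_eq_getElem hi', part_eq_getElem hi]
    rcases h.eq_or_lt with rfl | hlt
    · exact le_rfl
    · exact List.pairwise_iff_getElem.mp hl i i' hi hi' hlt
  · rw [part_eq_zero (not_lt.mp hi')]; exact Nat.zero_le _

lemma part_pos_iff {l : List ℕ} (hl : ∀ p ∈ l, 0 < p) {i : ℕ} : 0 < part l i ↔ i < l.length := by
  refine ⟨fun h => ?_, fun h => ?_⟩
  · by_contra hi
    rw [part_eq_zero (not_lt.mp hi)] at h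
    exact lt_irrefl 0 h
  · rw [part_eq_getElem h]; exact hl _ (List.getElem_mem h)

lemma part_ext {l m : List ℕ} (hl : IsPartition l) (hm : IsPartition m)
    (h : ∀ i, part l i = part m i) : l = m := by
  have hlt : ∀ i, i < l.length ↔ i < m.length := fun i => by
    rw [← part_pos_iff hl.2, ← part_pos_iff hm.2, h]
  have hlen : l.length = m.length := by
    have := hlt l.length; have := hlt m.length; omega
  exact List.ext_getElem hlen fun i hi₁ hi₂ => by
    rw [← part_eq_getElem hi₁, ← part_eq_getElem hi₂, h]

lemma conjPart_le_length (l : List ℕ) (j : ℕ) : conjPart l j ≤ l.length :=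
  List.length_filter_le _ _

lemma conjPart_zero {l : List ℕ} (hl : ∀ p ∈ l, 0 < p) : conjPart l 0 = l.length := by
  rw [conjPart, List.filter_eq_self.mpr (by simpa using hl)]

lemma lt_part_iff {l : List ℕ} (hl : l.Pairwise (· ≥ ·)) (i j : ℕ) :
    j < part l i ↔ i < conjPart l j := by
  induction l generalizing i with
  | nil => simp [part, conjPart]
  | cons a t ih =>
    obtain ⟨ha, ht⟩ := List.pairwise_cons.mp hl
    by_cases hja : j < a
    · have hc : conjPart (a :: t) j = conjPart t j + 1 := by
        simp [conjPart, hja]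
      cases i with
      | zero => simp [part, hc, hja]
      | succ i => simpa [part, hc] using ih ht i
    · have hc : conjPart (a :: t) j = 0 := by
        simp only [conjPart, List.length_eq_zero_iff, List.filter_eq_nil_iff, List.mem_cons,
          decide_eq_true_eq, not_lt]
        rintro b (rfl | hb)
        · exact not_lt.mp hja
        · exact (ha b hb).trans (not_lt.mp hja)
      have hle : part (a :: t) i ≤ a :=
        part_le_of_forall_le (by simpa using ha) i
      rw [hc]
      omega

lemma part_map_pred (l : List ℕ) (i : ℕ) : part (l.map fun p => p - 1) i = part l i - 1 :=
  List.getD_map (l := l) (d := 0) (n := i) fun p => p - 1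

lemma part_filter_pos {l : List ℕ} (hl : l.Pairwise (· ≥ ·)) (i : ℕ) :
    part (l.filter (fun p => 0 < p)) i = part l i := by
  induction l generalizing i with
  | nil => rfl
  | cons a t ih =>
    obtain ⟨ha, ht⟩ := List.pairwise_cons.mp hl
    rcases Nat.eq_zero_or_pos a with rfl | ha
    · have hzero : ∀ b ∈ (0 :: t), b ≤ 0 := by simpa using ha
      rw [List.filter_eq_nil_iff.mpr (by simpa using hzero)]
      exact (Nat.eq_zero_of_le_zero (part_le_of_forall_le hzero i)).symm
    · rw [List.filter_cons_of_pos (by simpa using ha)]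
      cases i with
      | zero => rfl
      | succ i => exact ih ht i

lemma pairwise_ge_map_pred {l : List ℕ} (hl : l.Pairwise (· ≥ ·)) :
    (l.map fun p => p - 1).Pairwise (· ≥ ·) :=
  hl.map _ fun _ _ h => Nat.sub_le_sub_right h 1

lemma part_bar {l : List ℕ} (hl : l.Pairwise (· ≥ ·)) (i : ℕ) : part (bar l) i = part l i - 1 := by
  rw [bar, part_filter_pos (pairwise_ge_map_pred hl), part_map_pred]

lemma conjPart_bar (l : List ℕ) (j : ℕ) : conjPart (bar l) j = conjPart l (j + 1) := by
  simp only [conjPart, bar, List.filter_filter, ← List.countP_eq_length_filter, List.countP_map]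
  exact List.countP_congr fun a _ => by simp; omega

lemma length_bar_le (l : List ℕ) : (bar l).length ≤ l.length :=
  (List.length_filter_le _ _).trans (List.length_map _).le

lemma IsPartition.bar {l : List ℕ} (hl : IsPartition l) : IsPartition (bar l) :=
  ⟨(pairwise_ge_map_pred hl.1).filter _,
    fun p hp => by simpa using (List.mem_filter.mp hp).2⟩

lemma bar_append_replicate_one (l : List ℕ) (k : ℕ) :
    bar (l ++ List.replicate k 1) = bar l := by
  simp [bar, List.map_replicate, List.filter_append]

lemma IsPartition.append_replicate_one {l : List ℕ} (hl : IsPartition l) (k : ℕ) :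
    IsPartition (l ++ List.replicate k 1) := by
  refine ⟨List.pairwise_append.mpr ⟨hl.1, List.pairwise_replicate.mpr (Or.inr le_rfl), ?_⟩, ?_⟩
  · intro a ha b hb
    rw [List.eq_of_mem_replicate hb]
    exact hl.2 a ha
  · intro p hp
    rcases List.mem_append.mp hp with h | h
    · exact hl.2 p h
    · rw [List.eq_of_mem_replicate h]; exact Nat.one_pos

lemma length_rn (n : ℕ) (l : List ℕ) : (rn n l).length = n + (l.length - (n + 1)) := by
  simp [rn]

lemma part_rn_of_lt {n i : ℕ} (l : List ℕ) (h : i < n) : part (rn n l) i = part l i + 1 := by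
  rw [rn, part, List.getD_append _ _ _ _ (by simpa using h),
    List.getD_eq_getElem _ _ (by simpa using h)]
  simp

lemma part_rn_of_le {n i : ℕ} (l : List ℕ) (h : n ≤ i) : part (rn n l) i = part l (i + 1) := by
  rw [rn, part, List.getD_append_right _ _ _ _ (by simpa using h)]
  simp only [List.length_map, List.length_range, List.getD_eq_getElem?_getD, List.getElem?_drop,
    part]
  congr 2
  omega

lemma IsPartition.rn {l : List ℕ} (hl : IsPartition l) (n : ℕ) : IsPartition (rn n l) := by
  refine ⟨List.pairwise_iff_getElem.mpr fun i j hi hj hij => ?_, fun p hp => ?_⟩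
  · rw [← part_eq_getElem hi, ← part_eq_getElem hj]
    by_cases hjn : j < n
    · rw [part_rn_of_lt l (hij.trans hjn), part_rn_of_lt l hjn]
      exact Nat.succ_le_succ (part_antitone hl.1 hij.le)
    · rw [part_rn_of_le l (not_lt.mp hjn)]
      by_cases hin : i < n
      · rw [part_rn_of_lt l hin]
        have := part_antitone hl.1 (show i ≤ j + 1 by omega)
        omega
      · rw [part_rn_of_le l (not_lt.mp hin)]
        exact part_antitone hl.1 (by omega)
  · rcases List.mem_append.mp hp with h | h
    · obtain ⟨i, _, rfl⟩ := List.mem_map.mp h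
      exact Nat.succ_pos _
    · exact hl.2 _ (List.mem_of_mem_drop h)

lemma bar_rn_of_length_le {l : List ℕ} (hl : IsPartition l) {n : ℕ} (h : l.length ≤ n) :
    bar (rn n l) = l := by
  refine part_ext (hl.rn n).bar hl fun i => ?_
  rw [part_bar (hl.rn n).1]
  by_cases hin : i < n
  · rw [part_rn_of_lt l hin]; rfl
  · rw [part_rn_of_le l (not_lt.mp hin), part_eq_zero (i := i + 1) (by omega),
      part_eq_zero (i := i) (by omega)]

lemma prod_Ico_comp_succ_mul {M : Type*} [CommMonoid M] {a b : ℕ} (hab : a ≤ b) (f : ℕ → M) :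
    (∏ i ∈ Ico a b, f (i + 1)) * f a = (∏ i ∈ Ico a b, f i) * f b := by
  rw [prod_Ico_add', mul_comm, ← prod_eq_prod_Ico_succ_bot (by omega),
    prod_Ico_succ_top (by omega)]

lemma prod_Ico_rows_eq_prod_cols {M : Type*} [CommMonoid M] {mu : List ℕ}
    (hmu : mu.Pairwise (· ≥ ·)) (L : ℕ) (f : ℕ → ℕ → M) :
    ∏ i ∈ Ico L mu.length, ∏ j ∈ range (part mu i), f i j
      = ∏ j ∈ range (part mu L), ∏ i ∈ Ico L (conjPart mu j), f i j := by
  refine prod_comm' fun i j => ?_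
  simp only [mem_Ico, mem_range]
  constructor
  · rintro ⟨⟨hLi, -⟩, hj⟩
    exact ⟨⟨hLi, (lt_part_iff hmu i j).mp hj⟩, hj.trans_le (part_antitone hmu hLi)⟩
  · rintro ⟨⟨hLi, hi⟩, -⟩
    exact ⟨⟨hLi, hi.trans_le (conjPart_le_length mu j)⟩, (lt_part_iff hmu i j).mpr hi⟩

lemma prod_cells_bar {M : Type*} [CommMonoid M] {l : List ℕ} (hl : l.Pairwise (· ≥ ·))
    (f : ℕ → ℕ → M) :
    ∏ i ∈ range (bar l).length, ∏ j ∈ range (part (bar l) i), f i j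
      = ∏ i ∈ range l.length, ∏ j ∈ range (part l i - 1), f i j := by
  rw [prod_subset (range_subset_range.mpr (length_bar_le l)) fun i _ hi => by
    rw [part_eq_zero (not_lt.mp (mem_range.not.mp hi)), prod_range_zero]]
  simp only [part_bar hl]

noncomputable section

def linFactor (q : ℂ) (e : ℤ) : ℂ[X] := 1 - C (q ^ e) * X

def nekPolyFst (q : ℂ) (s : ℤ) (A B : List ℕ) : ℂ[X] :=
  ∏ i ∈ range A.length, ∏ j ∈ range (part A i),
    linFactor q (s - ((conjPart A j : ℤ) - (i + 1)) - ((part B i : ℤ) - (j + 1)) - 1)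

def nekPolySnd (q : ℂ) (s : ℤ) (A B : List ℕ) : ℂ[X] :=
  ∏ i ∈ range B.length, ∏ j ∈ range (part B i),
    linFactor q (s + ((conjPart B j : ℤ) - (i + 1)) + ((part A i : ℤ) - (j + 1)) + 1)

def nekPoly (q : ℂ) (s : ℤ) (A B : List ℕ) : ℂ[X] := nekPolyFst q s A B * nekPolySnd q s A B

/-- `N_{μ,B}(q^s u) / N_{μ,B̄}(q^(s-1) u) = barRatioNum q s μ ℓ(B) / barRatioDen q s μ ℓ(B)`. -/
def barRatioNum (q : ℂ) (s : ℤ) (mu : List ℕ) (L : ℕ) : ℂ[X] :=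
  (∏ i ∈ range L, linFactor q (s + L + part mu i - i - 1)) *
    ∏ j ∈ range (part mu L), linFactor q (s + j)

def barRatioDen (q : ℂ) (s : ℤ) (mu : List ℕ) (L : ℕ) : ℂ[X] :=
  ∏ j ∈ range (part mu L), linFactor q (s + L + j - conjPart mu j)

end

lemma eval_linFactor_add {q : ℂ} (hq : q ≠ 0) (s e : ℤ) (u : ℂ) :
    (linFactor q (s + e)).eval u = 1 - q ^ e * (q ^ s * u) := by
  simp only [linFactor, eval_sub, eval_one, eval_mul, eval_C, eval_X, zpow_add₀ hq]
  ring

lemma eval_nekPoly {q : ℂ} (hq : q ≠ 0) (s : ℤ) (A B : List ℕ) (u : ℂ) :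
    (nekPoly q s A B).eval u = nek q (q ^ s * u) A B := by
  simp only [nekPoly, nekPolyFst, nekPolySnd, nek, eval_mul, eval_prod, ← eval_linFactor_add hq]
  congr 1 <;> refine prod_congr rfl fun i _ => prod_congr rfl fun j _ => ?_ <;>
    ring_nf

lemma eval_zero_barRatioNum (q : ℂ) (s : ℤ) (mu : List ℕ) (L : ℕ) :
    (barRatioNum q s mu L).eval 0 = 1 := by
  simp [barRatioNum, linFactor, eval_prod]

lemma eval_zero_barRatioDen (q : ℂ) (s : ℤ) (mu : List ℕ) (L : ℕ) :
    (barRatioDen q s mu L).eval 0 = 1 := by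
  simp [barRatioDen, linFactor, eval_prod]

lemma nekPolyFst_mul_barRatioDen {mu B : List ℕ} (hmu : mu.Pairwise (· ≥ ·)) (hB : IsPartition B)
    (q : ℂ) (s : ℤ) :
    nekPolyFst q s mu B * barRatioDen q s mu B.length
      = nekPolyFst q (s - 1) mu (bar B) * ∏ j ∈ range (part mu B.length), linFactor q (s + j) := by
  set L := B.length
  have hsplit : ∀ g : ℕ → ℂ[X], ∏ i ∈ range mu.length, g i
      = (∏ i ∈ (range mu.length).filter (· < L), g i) * ∏ i ∈ Ico L mu.length, g i := fun g => by
    rw [← prod_filter_mul_prod_filter_not _ (· < L)]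
    congr 2
    ext i
    simp only [mem_filter, mem_range, mem_Ico]
    omega
  rw [nekPolyFst, nekPolyFst, hsplit, hsplit, mul_assoc, mul_assoc]
  refine congrArg₂ (· * ·) ?_ ?_
  · refine prod_congr rfl fun i hi => prod_congr rfl fun j _ => ?_
    have hBi : 0 < part B i := (part_pos_iff hB.2).mpr (mem_filter.mp hi).2
    rw [part_bar hB.1]
    congr 1
    omega
  · rw [prod_Ico_rows_eq_prod_cols hmu, prod_Ico_rows_eq_prod_cols hmu, barRatioDen,
      ← prod_mul_distrib, ← prod_mul_distrib]
    refine prod_congr rfl fun j hj => ?_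
    have hLj : L ≤ conjPart mu j := ((lt_part_iff hmu L j).mp (mem_range.mp hj)).le
    -- below row `L` the cells of `μ` see no arm of `B` and the factors telescope down each column
    convert prod_Ico_comp_succ_mul hLj fun i => linFactor q (s + i + j - conjPart mu j) using 2
    · refine prod_congr rfl fun i hi => ?_
      rw [part_eq_zero (mem_Ico.mp hi).1]
      congr 1
      push_cast
      ring
    · refine prod_congr rfl fun i hi => ?_
      rw [part_eq_zero ((length_bar_le B).trans (mem_Ico.mp hi).1)]
      congr 1
      push_cast
      ring
    · congr 1
      ring

lemma nekPolySnd_eq_mul_nekPolySnd_bar {B : List ℕ} (hB : IsPartition B) (q : ℂ) (s : ℤ)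
    (mu : List ℕ) :
    nekPolySnd q s mu B = (∏ i ∈ range B.length, linFactor q (s + B.length + part mu i - i - 1))
      * nekPolySnd q (s - 1) mu (bar B) := by
  rw [nekPolySnd, nekPolySnd, prod_cells_bar hB.1, ← prod_mul_distrib]
  refine prod_congr rfl fun i hi => ?_
  obtain ⟨m, hm⟩ : ∃ m, part B i = m + 1 :=
    Nat.exists_eq_add_one.mpr ((part_pos_iff hB.2).mpr (mem_range.mp hi))
  rw [hm, prod_range_succ', Nat.add_sub_cancel, conjPart_zero hB.2, mul_comm]
  congr 1
  · congr 1
    push_cast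
    ring
  · refine prod_congr rfl fun j _ => ?_
    rw [conjPart_bar]
    congr 1
    push_cast
    ring

lemma nekPoly_mul_barRatioDen {mu B : List ℕ} (hmu : mu.Pairwise (· ≥ ·)) (hB : IsPartition B)
    (q : ℂ) (s : ℤ) :
    nekPoly q s mu B * barRatioDen q s mu B.length
      = nekPoly q (s - 1) mu (bar B) * barRatioNum q s mu B.length := by
  rw [nekPoly, nekPoly, barRatioNum, nekPolySnd_eq_mul_nekPolySnd_bar hB, mul_right_comm,
    nekPolyFst_mul_barRatioDen hmu hB]
  ring

lemma barRatioNum_succ_mul_barRatioDen {mu : List ℕ} (hmu : mu.Pairwise (· ≥ ·)) (q : ℂ) (s : ℤ)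
    (K : ℕ) :
    barRatioNum q s mu (K + 1) * barRatioDen q (s + 1) mu K
      = linFactor q s * (barRatioNum q (s + 1) mu K * barRatioDen q s mu (K + 1)) := by
  set a := part mu K
  set b := part mu (K + 1)
  have hba : b ≤ a := part_antitone hmu K.le_succ
  have hrow : ∏ i ∈ range (K + 1), linFactor q (s + (K + 1 : ℕ) + part mu i - i - 1)
      = (∏ i ∈ range K, linFactor q (s + 1 + K + part mu i - i - 1)) * linFactor q (s + a) := by
    rw [prod_range_succ]
    refine congrArg₂ (· * ·) ?_ ?_
    · refine prod_congr rfl fun i _ => ?_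
      congr 1
      push_cast
      ring
    · congr 1
      push_cast
      ring
  have hden : barRatioDen q (s + 1) mu K
      = (∏ j ∈ range b, linFactor q (s + (K + 1 : ℕ) + j - conjPart mu j))
        * ∏ j ∈ Ico b a, linFactor q (s + j) := by
    rw [barRatioDen, ← prod_range_mul_prod_Ico _ hba]
    refine congrArg₂ (· * ·) ?_ ?_
    · refine prod_congr rfl fun j _ => ?_
      congr 1
      push_cast
      ring
    · refine prod_congr rfl fun j hj => ?_
      obtain ⟨hbj, hja⟩ := mem_Ico.mp hj
      have hK : K < conjPart mu j := (lt_part_iff hmu K j).mp hja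
      have hK' : conjPart mu j ≤ K + 1 :=
        not_lt.mp fun h => hbj.not_gt ((lt_part_iff hmu (K + 1) j).mpr h)
      rw [show conjPart mu j = K + 1 by omega]
      congr 1
      push_cast
      ring
  have htele : linFactor q (s + a) * ∏ j ∈ range a, linFactor q (s + j)
      = linFactor q s * ∏ j ∈ range a, linFactor q (s + 1 + j) := by
    have h := prod_Ico_comp_succ_mul (Nat.zero_le a) fun j => linFactor q (s + j)
    simp only [← range_eq_Ico, Nat.cast_zero, add_zero, Nat.cast_add, Nat.cast_one] at h
    rw [mul_comm, ← h, mul_comm]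
    simp only [add_assoc, add_comm (1 : ℤ)]
  have hsplit := prod_range_mul_prod_Ico (fun j => linFactor q (s + j)) hba
  rw [hden, barRatioNum, barRatioNum, barRatioDen, hrow]
  linear_combination
    (∏ i ∈ range K, linFactor q (s + 1 + K + part mu i - i - 1))
      * (∏ j ∈ range b, linFactor q (s + (K + 1 : ℕ) + j - conjPart mu j))
      * (linFactor q (s + a) * hsplit + htele)

lemma nekPoly_mul_nekPoly_bar {mu B₁ B₂ : List ℕ} (hmu : mu.Pairwise (· ≥ ·))
    (hB₁ : IsPartition B₁) (hB₂ : IsPartition B₂) (hlen : B₁.length = B₂.length + 1)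
    (q : ℂ) (s : ℤ) :
    nekPoly q s mu B₁ * nekPoly q s mu (bar B₂)
      = linFactor q s * nekPoly q (s - 1) mu (bar B₁) * nekPoly q (s + 1) mu B₂ := by
  set K := B₂.length
  have h₁ := nekPoly_mul_barRatioDen hmu hB₁ q s
  have h₂ := nekPoly_mul_barRatioDen hmu hB₂ q (s + 1)
  have h₃ := barRatioNum_succ_mul_barRatioDen hmu q s K
  rw [hlen] at h₁
  rw [add_sub_cancel_right] at h₂
  have hne : barRatioDen q s mu (K + 1) * barRatioNum q (s + 1) mu K ≠ 0 := fun h => by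
    simpa [eval_zero_barRatioDen, eval_zero_barRatioNum] using congrArg (eval 0) h
  refine mul_right_cancel₀ hne ?_
  linear_combination
    nekPoly q s mu (bar B₂) * barRatioNum q (s + 1) mu K * h₁
      - nekPoly q (s - 1) mu (bar B₁) * barRatioNum q s mu (K + 1) * h₂
      + nekPoly q (s - 1) mu (bar B₁) * nekPoly q (s + 1) mu B₂ * h₃

lemma nek_mul_nek_bar {q : ℂ} (hq : q ≠ 0) {mu B₁ B₂ : List ℕ} (hmu : mu.Pairwise (· ≥ ·))
    (hB₁ : IsPartition B₁) (hB₂ : IsPartition B₂) (hlen : B₁.length = B₂.length + 1) (u : ℂ) :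
    nek q u mu B₁ * nek q u mu (bar B₂)
      = (1 - u) * nek q (q⁻¹ * u) mu (bar B₁) * nek q (q * u) mu B₂ := by
  have h := congrArg (eval u) (nekPoly_mul_nekPoly_bar hmu hB₁ hB₂ hlen q 0)
  simpa [eval_nekPoly hq, linFactor] using h

theorem stmt17 (q : ℂ) (hq : q ≠ 0)
    (lam mu : List ℕ) (hlam : IsPartition lam) (hmu : IsPartition mu) (n : ℕ) (u : ℂ) :
    let eta := rn n lam
    let tilde := if n < lam.length then bar eta
                 else lam ++ List.replicate (n - lam.length + 1) 1
    nek q u mu lam * nek q u mu tilde =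
      (1 - u) * nek q (q⁻¹ * u) mu (bar lam) * nek q (q * u) mu eta := by
  intro eta tilde
  have hlen := length_rn n lam
  by_cases hn : n < lam.length
  · rw [show tilde = bar eta from if_pos hn]
    exact nek_mul_nek_bar hq hmu.1 hlam (hlam.rn n) (by omega) u
  · rw [show tilde = lam ++ List.replicate (n - lam.length + 1) 1 from if_neg hn, mul_comm]
    have h := nek_mul_nek_bar hq hmu.1 (hlam.append_replicate_one (n - lam.length + 1))
      (hlam.rn n) (by simp; omega) u
    rwa [bar_rn_of_length_le hlam (not_lt.mp hn), bar_append_replicate_one] at h
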